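/- arXiv:2003.06912 — 4 statements merged into one kernel-verified Lean document; each statement's English description precedes it below -/
import Mathlib

section
/- (First part of Proposition 3.1, the convergence lemma.) Let (U, μ) be a finite measure space and let p_s : U → ℝ be measurable with p_s ∈ L²(U). Suppose {Zⁿ}, {Dⁿ} ⊂ L²(U; M₃) and {p_fⁿ} ⊂ L²(U) are sequences such that: (i) for each n, Zⁿ = τ(p_fⁿ) Dⁿ/(|Dⁿ| + 1/n) a.e. in U, where τ(p) := (p_s − p)⁺; (ii) Zⁿ converges weakly in L²(U; M₃) to some Z; (iii) Dⁿ converges weakly in L²(U; M₃) to some D; (iv) p_fⁿ → p_f strongly in L²(U) and a.e. in U; (v) limsup_{n→∞} ∫_U Zⁿ : Dⁿ dμ ≤ ∫_U Z : D dμ. Then (|Z| − τ(p_f))⁺ + | |D| Z − τ(p_f) D | = 0 a.e. in U. -/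
/-!
Write `τₙ = (p_s − p_fⁿ)⁺` and `σ = (p_s − p_f)⁺`; since `x ↦ (p_s − x)⁺` is 1-Lipschitz,
`τₙ → σ` in `L²`. Pointwise `|Zⁿ| ≤ τₙ`, so testing `Zⁿ ⇀ Z` against any `A` gives
`∫ Z : A ≤ ∫ σ |A|`, whence `|Z| ≤ σ` a.e. Pointwise `Zⁿ : Dⁿ ≥ τₙ |Dⁿ| − τₙ/(n+1)`; testing
`Dⁿ ⇀ D` against `σ D/|D|`, and using that weakly convergent sequences are bounded, gives
`∫ σ |D| ≤ limsup ∫ Zⁿ : Dⁿ ≤ ∫ Z : D ≤ ∫ σ |D|`. Hence `Z : D = σ |D|` a.e., which together with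
`|Z| ≤ σ` is the equality case of Cauchy–Schwarz: `|D| Z = σ D`.
-/

open MeasureTheory Filter
open scoped RealInnerProductSpace Topology ENNReal

/-- `M₃`: the space of 3×3 real matrices with the Frobenius inner product. -/
abbrev M3 := EuclideanSpace ℝ (Fin 3 × Fin 3)

section Pointwise

variable {E : Type*} [NormedAddCommGroup E] [InnerProductSpace ℝ E]

theorem norm_div_norm_add_smul_le {t ε : ℝ} (ht : 0 ≤ t) (hε : 0 < ε) (d : E) :
    ‖(t / (‖d‖ + ε)) • d‖ ≤ t := by
  have hpos : 0 < ‖d‖ + ε := by positivity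
  rw [norm_smul, Real.norm_of_nonneg (by positivity), div_mul_eq_mul_div, div_le_iff₀ hpos]
  nlinarith

theorem mul_norm_sub_le_inner_div_norm_add_smul {t ε : ℝ} (ht : 0 ≤ t) (hε : 0 < ε) (d : E) :
    t * ‖d‖ - ε * t ≤ ⟪(t / (‖d‖ + ε)) • d, d⟫ := by
  have hpos : 0 < ‖d‖ + ε := by positivity
  rw [real_inner_smul_left, real_inner_self_eq_norm_mul_norm, div_mul_eq_mul_div,
    le_div_iff₀ hpos]
  nlinarith [mul_nonneg (mul_nonneg hε.le hε.le) ht]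

theorem norm_div_norm_smul_le (s : ℝ) (d : E) : ‖(s / ‖d‖) • d‖ ≤ |s| := by
  rw [norm_smul, Real.norm_eq_abs, abs_div, abs_norm]
  rcases eq_or_ne ‖d‖ 0 with hd | hd
  · simp [hd]
  · rw [div_mul_cancel₀ _ hd]

theorem inner_div_norm_smul (s : ℝ) (d : E) : ⟪d, (s / ‖d‖) • d⟫ = s * ‖d‖ := by
  rw [real_inner_smul_right, real_inner_self_eq_norm_mul_norm]
  rcases eq_or_ne ‖d‖ 0 with hd | hd
  · simp [hd]
  · field_simp

theorem inner_div_norm_smul_le {s : ℝ} (hs : 0 ≤ s) (d' d : E) :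
    ⟪d', (s / ‖d‖) • d⟫ ≤ s * ‖d'‖ := by
  calc ⟪d', (s / ‖d‖) • d⟫ ≤ ‖d'‖ * ‖(s / ‖d‖) • d‖ := real_inner_le_norm _ _
    _ ≤ ‖d'‖ * s := by
      gcongr; simpa only [abs_of_nonneg hs] using norm_div_norm_smul_le s d
    _ = s * ‖d'‖ := mul_comm _ _

theorem inner_sub_mul_norm_posPart_smul {s : ℝ} (hs : 0 ≤ s) (z : E) :
    ⟪z, (max (‖z‖ - s) 0 / ‖z‖) • z⟫ - s * ‖(max (‖z‖ - s) 0 / ‖z‖) • z‖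
      = max (‖z‖ - s) 0 ^ 2 := by
  rcases eq_or_ne ‖z‖ 0 with hz | hz
  · simp [hz, hs]
  rw [real_inner_smul_right, real_inner_self_eq_norm_mul_norm, norm_smul, Real.norm_of_nonneg
    (by positivity)]
  field_simp
  rcases le_total (‖z‖ - s) 0 with h | h
  · simp [max_eq_right h]
  · rw [max_eq_left h]; ring

theorem smul_eq_smul_of_norm_le_of_mul_norm_le_inner {z d : E} {s : ℝ} (hz : ‖z‖ ≤ s)
    (hzd : s * ‖d‖ ≤ ⟪z, d⟫) : ‖d‖ • z = s • d := by
  have hs : 0 ≤ s := (norm_nonneg z).trans hz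
  rw [← sub_eq_zero, ← norm_eq_zero, ← sq_eq_zero_iff (M₀ := ℝ)]
  refine le_antisymm ?_ (sq_nonneg _)
  rw [norm_sub_sq_real, real_inner_smul_left, real_inner_smul_right, norm_smul, norm_smul,
    Real.norm_of_nonneg (norm_nonneg d), Real.norm_of_nonneg hs]
  nlinarith [mul_le_mul hz hz (norm_nonneg z) hs, mul_nonneg hs (norm_nonneg d),
    mul_nonneg (norm_nonneg d) (norm_nonneg d)]

end Pointwise

def yieldStress {α : Type*} (ps p : α → ℝ) (x : α) : ℝ := max (ps x - p x) 0

theorem yieldStress_nonneg {α : Type*} (ps p : α → ℝ) (x : α) : 0 ≤ yieldStress ps p x :=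
  le_max_right _ _

namespace MeasureTheory

variable {α E : Type*} [MeasurableSpace α] {μ : Measure α}
  [NormedAddCommGroup E] [InnerProductSpace ℝ E]

theorem ae_eq_of_ae_le_of_integral_le {f g : α → ℝ} (hf : Integrable f μ) (hg : Integrable g μ)
    (hfg : f ≤ᵐ[μ] g) (hgf : ∫ x, g x ∂μ ≤ ∫ x, f x ∂μ) : f =ᵐ[μ] g :=
  (integral_eq_iff_of_ae_le hf hg hfg).1 (le_antisymm (integral_mono_ae hf hg hfg) hgf)

theorem MemLp.integral_inner_eq_inner_toLp {f g : α → E} (hf : MemLp f 2 μ) (hg : MemLp g 2 μ) :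
    ∫ x, ⟪f x, g x⟫ ∂μ = ⟪hf.toLp f, hg.toLp g⟫ := by
  rw [L2.inner_def]
  refine integral_congr_ae ?_
  filter_upwards [hf.coeFn_toLp, hg.coeFn_toLp] with x hfx hgx
  rw [hfx, hgx]

theorem MemLp.integrable_inner {f g : α → E} (hf : MemLp f 2 μ) (hg : MemLp g 2 μ) :
    Integrable (fun x => ⟪f x, g x⟫) μ := by
  refine (L2.integrable_inner (𝕜 := ℝ) (hf.toLp f) (hg.toLp g)).congr ?_
  filter_upwards [hf.coeFn_toLp, hg.coeFn_toLp] with x hfx hgx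
  rw [hfx, hgx]

theorem abs_integral_inner_le_eLpNorm_mul {f g : α → E} (hf : MemLp f 2 μ) (hg : MemLp g 2 μ) :
    |∫ x, ⟪f x, g x⟫ ∂μ| ≤ (eLpNorm f 2 μ).toReal * (eLpNorm g 2 μ).toReal := by
  rw [hf.integral_inner_eq_inner_toLp hg, ← Lp.norm_toLp f hf, ← Lp.norm_toLp g hg]
  exact abs_real_inner_le_norm _ _

theorem abs_integral_mul_le_eLpNorm_mul {f g : α → ℝ} (hf : MemLp f 2 μ) (hg : MemLp g 2 μ) :
    |∫ x, f x * g x ∂μ| ≤ (eLpNorm f 2 μ).toReal * (eLpNorm g 2 μ).toReal := by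
  simpa only [real_inner_eq_re_inner, RCLike.inner_apply, conj_trivial, RCLike.re_to_real,
    mul_comm] using abs_integral_inner_le_eLpNorm_mul hf hg

theorem tendsto_integral_mul_of_tendsto_eLpNorm_zero {f g : ℕ → α → ℝ} {C : ℝ}
    (hf : ∀ n, MemLp (f n) 2 μ) (hg : ∀ n, MemLp (g n) 2 μ)
    (hf0 : Tendsto (fun n => eLpNorm (f n) 2 μ) atTop (𝓝 0))
    (hgC : ∀ n, (eLpNorm (g n) 2 μ).toReal ≤ C) :
    Tendsto (fun n => ∫ x, f n x * g n x ∂μ) atTop (𝓝 0) := by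
  have hbound : Tendsto (fun n => (eLpNorm (f n) 2 μ).toReal * C) atTop (𝓝 0) := by
    simpa using ((ENNReal.tendsto_toReal ENNReal.zero_ne_top).comp hf0).mul_const C
  refine squeeze_zero_norm (fun n => ?_) hbound
  rw [Real.norm_eq_abs]
  exact (abs_integral_mul_le_eLpNorm_mul (hf n) (hg n)).trans
    (mul_le_mul_of_nonneg_left (hgC n) ENNReal.toReal_nonneg)

theorem tendsto_integral_of_tendsto_eLpNorm_two [IsFiniteMeasure μ] {f : ℕ → α → ℝ} {g : α → ℝ}
    (hf : ∀ n, MemLp (f n) 2 μ) (hg : MemLp g 2 μ)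
    (hfg : Tendsto (fun n => eLpNorm (f n - g) 2 μ) atTop (𝓝 0)) :
    Tendsto (fun n => ∫ x, f n x ∂μ) atTop (𝓝 (∫ x, g x ∂μ)) := by
  have hdiff := tendsto_integral_mul_of_tendsto_eLpNorm_zero (fun n => (hf n).sub hg)
    (fun _ => memLp_const (1 : ℝ)) hfg (fun _ => le_rfl)
  have hlim := (tendsto_const_nhds (x := ∫ x, g x ∂μ)).add hdiff
  rw [add_zero] at hlim
  refine hlim.congr fun n => ?_
  simp only [Pi.sub_apply, mul_one]
  rw [integral_sub ((hf n).integrable one_le_two) (hg.integrable one_le_two), add_sub_cancel]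

theorem MemLp.div_norm_smul {p : ℝ≥0∞} {σ : α → ℝ} {d : α → E} (hσ : MemLp σ p μ)
    (hd : AEStronglyMeasurable d μ) : MemLp (fun x => (σ x / ‖d x‖) • d x) p μ :=
  hσ.of_le ((hσ.1.aemeasurable.div hd.norm.aemeasurable).aestronglyMeasurable.smul hd)
    (ae_of_all _ fun x => norm_div_norm_smul_le (σ x) (d x))

theorem MemLp.yieldStress {q : ℝ≥0∞} {ps p : α → ℝ} (hps : MemLp ps q μ) (hp : MemLp p q μ) :
    MemLp (_root_.yieldStress ps p) q μ :=
  (hps.sub hp).pos_part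

theorem tendsto_eLpNorm_yieldStress_sub {q : ℝ≥0∞} {ps : α → ℝ} {pf : ℕ → α → ℝ} {pflim : α → ℝ}
    (h : Tendsto (fun n => eLpNorm (pf n - pflim) q μ) atTop (𝓝 0)) :
    Tendsto (fun n => eLpNorm (yieldStress ps (pf n) - yieldStress ps pflim) q μ) atTop (𝓝 0) :=
  tendsto_of_tendsto_of_tendsto_of_le_of_le tendsto_const_nhds h (fun _ => zero_le) fun n =>
    eLpNorm_mono fun x => by
      simpa only [Real.norm_eq_abs, Pi.sub_apply, yieldStress, sub_sub_sub_cancel_left,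
        abs_sub_comm] using abs_max_sub_max_le_abs (ps x - pf n x) (ps x - pflim x) 0

theorem ae_norm_le_of_forall_integral_inner_le {f : α → E} {σ : α → ℝ} (hf : MemLp f 2 μ)
    (hσ : MemLp σ 2 μ) (hσ0 : ∀ᵐ x ∂μ, 0 ≤ σ x)
    (h : ∀ A : α → E, MemLp A 2 μ → ∫ x, ⟪f x, A x⟫ ∂μ ≤ ∫ x, σ x * ‖A x‖ ∂μ) :
    ∀ᵐ x ∂μ, ‖f x‖ ≤ σ x := by
  -- Against this test field the integrand of the difference is `((‖f‖ - σ)⁺)²`.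
  set excess : α → ℝ := fun x => max (‖f x‖ - σ x) 0
  have hA : MemLp (fun x => (excess x / ‖f x‖) • f x) 2 μ := by
    refine hf.of_le ?_ ?_
    · exact (((hf.1.norm.sub hσ.1).aemeasurable.max aemeasurable_const).div
        hf.1.norm.aemeasurable).aestronglyMeasurable.smul hf.1
    filter_upwards [hσ0] with x hx
    refine (norm_div_norm_smul_le _ _).trans ?_
    rw [abs_of_nonneg (le_max_right _ _)]
    exact max_le (by linarith) (norm_nonneg _)
  have hle : ∀ᵐ x ∂μ, σ x * ‖(excess x / ‖f x‖) • f x‖ ≤ ⟪f x, (excess x / ‖f x‖) • f x⟫ := by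
    filter_upwards [hσ0] with x hx
    nlinarith [inner_sub_mul_norm_posPart_smul hx (f x), sq_nonneg (excess x)]
  have hσA : Integrable (fun x => σ x * ‖(excess x / ‖f x‖) • f x‖) μ :=
    hσ.integrable_mul hA.norm
  have heq := ae_eq_of_ae_le_of_integral_le hσA (hf.integrable_inner hA) hle (h _ hA)
  filter_upwards [heq, hσ0] with x hx hx0
  have hsq := inner_sub_mul_norm_posPart_smul hx0 (f x)
  rw [← hx, sub_self, eq_comm, pow_eq_zero_iff two_ne_zero, max_eq_right_iff] at hsq
  linarith

def TendstoWeakL2 (μ : Measure α) (F : ℕ → α → E) (f : α → E) : Prop :=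
  ∀ A : α → E, MemLp A 2 μ →
    Tendsto (fun n => ∫ x, ⟪F n x, A x⟫ ∂μ) atTop (𝓝 (∫ x, ⟪f x, A x⟫ ∂μ))

namespace TendstoWeakL2

variable {F : ℕ → α → E} {f : α → E}

theorem exists_eLpNorm_le [CompleteSpace E] (hF : TendstoWeakL2 μ F f)
    (hFm : ∀ n, MemLp (F n) 2 μ) : ∃ C, ∀ n, (eLpNorm (F n) 2 μ).toReal ≤ C := by
  obtain ⟨C, hC⟩ := banach_steinhaus (g := fun n => innerSL ℝ ((hFm n).toLp (F n))) fun v => by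
    obtain ⟨c, hc⟩ := (hF v (Lp.memLp v)).abs.bddAbove_range
    refine ⟨c, fun n => ?_⟩
    rw [innerSL_apply_apply, Real.norm_eq_abs, ← Lp.toLp_coeFn v (Lp.memLp v),
      ← (hFm n).integral_inner_eq_inner_toLp]
    exact hc ⟨n, rfl⟩
  exact ⟨C, fun n => by simpa only [innerSL_apply_norm, Lp.norm_toLp] using hC n⟩

theorem isBoundedUnder_le_integral_inner [CompleteSpace E] {G : ℕ → α → E} {g : α → E}
    (hF : TendstoWeakL2 μ F f) (hG : TendstoWeakL2 μ G g)
    (hFm : ∀ n, MemLp (F n) 2 μ) (hGm : ∀ n, MemLp (G n) 2 μ) :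
    IsBoundedUnder (· ≤ ·) atTop (fun n => ∫ x, ⟪F n x, G n x⟫ ∂μ) := by
  obtain ⟨CF, hCF⟩ := hF.exists_eLpNorm_le hFm
  obtain ⟨CG, hCG⟩ := hG.exists_eLpNorm_le hGm
  refine isBoundedUnder_of ⟨CF * CG, fun n => (le_abs_self _).trans ?_⟩
  exact (abs_integral_inner_le_eLpNorm_mul (hFm n) (hGm n)).trans
    (mul_le_mul (hCF n) (hCG n) ENNReal.toReal_nonneg (ENNReal.toReal_nonneg.trans (hCF 0)))

theorem integral_inner_le_integral_mul_norm {τ : ℕ → α → ℝ} {σ : α → ℝ}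
    (hF : TendstoWeakL2 μ F f) (hFm : ∀ n, MemLp (F n) 2 μ)
    (hτ : ∀ n, MemLp (τ n) 2 μ) (hσ : MemLp σ 2 μ) (hFτ : ∀ n, ∀ᵐ x ∂μ, ‖F n x‖ ≤ τ n x)
    (hτσ : Tendsto (fun n => eLpNorm (τ n - σ) 2 μ) atTop (𝓝 0)) {A : α → E}
    (hA : MemLp A 2 μ) : ∫ x, ⟪f x, A x⟫ ∂μ ≤ ∫ x, σ x * ‖A x‖ ∂μ := by
  have hupper : ∀ n, ∫ x, ⟪F n x, A x⟫ ∂μ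
      ≤ ∫ x, σ x * ‖A x‖ ∂μ + ∫ x, (τ n - σ) x * ‖A x‖ ∂μ := by
    intro n
    have hσA : Integrable (fun x => σ x * ‖A x‖) μ := hσ.integrable_mul hA.norm
    have hτσA : Integrable (fun x => (τ n - σ) x * ‖A x‖) μ :=
      ((hτ n).sub hσ).integrable_mul hA.norm
    rw [← integral_add hσA hτσA]
    refine integral_mono_ae ((hFm n).integrable_inner hA) (hσA.add hτσA) ?_
    filter_upwards [hFτ n] with x hx
    calc ⟪F n x, A x⟫ ≤ ‖F n x‖ * ‖A x‖ := real_inner_le_norm _ _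
      _ ≤ τ n x * ‖A x‖ := by gcongr
      _ = _ := by simp only [Pi.sub_apply]; ring
  have hlim := (tendsto_const_nhds (x := ∫ x, σ x * ‖A x‖ ∂μ)).add <|
    tendsto_integral_mul_of_tendsto_eLpNorm_zero (fun n => (hτ n).sub hσ) (fun _ => hA.norm) hτσ
      (fun _ => le_rfl)
  rw [add_zero] at hlim
  exact le_of_tendsto_of_tendsto' (hF A hA) hlim hupper

end TendstoWeakL2

theorem integral_mul_norm_le_limsup_integral_inner [IsFiniteMeasure μ] [CompleteSpace E]
    {Z D : ℕ → α → E} {Zlim Dlim : α → E} {τ : ℕ → α → ℝ} {σ : α → ℝ} {ε : ℕ → ℝ}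
    (hZ : TendstoWeakL2 μ Z Zlim) (hD : TendstoWeakL2 μ D Dlim)
    (hZm : ∀ n, MemLp (Z n) 2 μ) (hDm : ∀ n, MemLp (D n) 2 μ)
    (hDlim : AEStronglyMeasurable Dlim μ) (hτ : ∀ n, MemLp (τ n) 2 μ) (hσ : MemLp σ 2 μ)
    (hσ0 : ∀ᵐ x ∂μ, 0 ≤ σ x) (hτσ : Tendsto (fun n => eLpNorm (τ n - σ) 2 μ) atTop (𝓝 0))
    (hε : Tendsto ε atTop (𝓝 0))
    (hZD : ∀ n, ∀ᵐ x ∂μ, τ n x * ‖D n x‖ - ε n * τ n x ≤ ⟪Z n x, D n x⟫) :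
    ∫ x, σ x * ‖Dlim x‖ ∂μ ≤ limsup (fun n => ∫ x, ⟪Z n x, D n x⟫ ∂μ) atTop := by
  set A : α → E := fun x => (σ x / ‖Dlim x‖) • Dlim x
  have hA : MemLp A 2 μ := hσ.div_norm_smul hDlim
  set lower : ℕ → ℝ := fun n => ∫ x, ⟪D n x, A x⟫ ∂μ + ∫ x, (τ n - σ) x * ‖D n x‖ ∂μ
    - ε n * ∫ x, τ n x ∂μ
  have hlower : ∀ n, lower n ≤ ∫ x, ⟪Z n x, D n x⟫ ∂μ := by
    intro n
    have hDA := (hDm n).integrable_inner hA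
    have hτσD : Integrable (fun x => (τ n - σ) x * ‖D n x‖) μ :=
      ((hτ n).sub hσ).integrable_mul (hDm n).norm
    have hτn := ((hτ n).integrable one_le_two).const_mul (ε n)
    have hsum : Integrable (fun x => ⟪D n x, A x⟫ + (τ n - σ) x * ‖D n x‖) μ := hDA.add hτσD
    have hlower_eq : lower n
        = ∫ x, (⟪D n x, A x⟫ + (τ n - σ) x * ‖D n x‖ - ε n * τ n x) ∂μ := by
      rw [integral_sub hsum hτn, integral_add hDA hτσD, integral_const_mul]
    rw [hlower_eq]
    refine integral_mono_ae (hsum.sub hτn) ((hZm n).integrable_inner (hDm n)) ?_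
    filter_upwards [hZD n, hσ0] with x hx hx0
    simp only [Pi.sub_apply]
    linarith [inner_div_norm_smul_le hx0 (D n x) (Dlim x)]
  have hlim : Tendsto lower atTop (𝓝 (∫ x, σ x * ‖Dlim x‖ ∂μ)) := by
    obtain ⟨C, hC⟩ := hD.exists_eLpNorm_le hDm
    have hweak := hD A hA
    have herr := tendsto_integral_mul_of_tendsto_eLpNorm_zero (fun n => (hτ n).sub hσ)
      (fun n => (hDm n).norm) hτσ fun n => by rw [eLpNorm_norm]; exact hC n
    have hreg := hε.mul (tendsto_integral_of_tendsto_eLpNorm_two hτ hσ hτσ)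
    rw [zero_mul] at hreg
    have hDA : ∫ x, ⟪Dlim x, A x⟫ ∂μ = ∫ x, σ x * ‖Dlim x‖ ∂μ :=
      integral_congr_ae (ae_of_all _ fun x => inner_div_norm_smul (σ x) (Dlim x))
    simpa only [hDA, add_zero, sub_zero] using (hweak.add herr).sub hreg
  calc ∫ x, σ x * ‖Dlim x‖ ∂μ = limsup lower atTop := hlim.limsup_eq.symm
    _ ≤ limsup (fun n => ∫ x, ⟪Z n x, D n x⟫ ∂μ) atTop :=
      limsup_le_limsup (Eventually.of_forall hlower) hlim.isCoboundedUnder_le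
        (hZ.isBoundedUnder_le_integral_inner hD hZm hDm)

end MeasureTheory

theorem convergence_lemma_plastic_part_general
    {U : Type*} [MeasurableSpace U] (μ : Measure U) [IsFiniteMeasure μ]
    (ps : U → ℝ) (hps_mem : MemLp ps 2 μ)
    (Z D : ℕ → U → M3) (pf : ℕ → U → ℝ)
    (Zlim Dlim : U → M3) (pflim : U → ℝ)
    (hZ_mem : ∀ n, MemLp (Z n) 2 μ) (hD_mem : ∀ n, MemLp (D n) 2 μ)
    (hpf_mem : ∀ n, MemLp (pf n) 2 μ)
    (hZlim_mem : MemLp Zlim 2 μ) (hDlim_mem : MemLp Dlim 2 μ)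
    (hpflim_mem : MemLp pflim 2 μ)
    (hZn : ∀ n : ℕ, ∀ᵐ x ∂μ,
      Z n x = (max (ps x - pf n x) 0 / (‖D n x‖ + 1 / (n + 1))) • D n x)
    (hZ_weak : ∀ A : U → M3, MemLp A 2 μ →
      Tendsto (fun n => ∫ x, ⟪Z n x, A x⟫ ∂μ) atTop (𝓝 (∫ x, ⟪Zlim x, A x⟫ ∂μ)))
    (hD_weak : ∀ A : U → M3, MemLp A 2 μ →
      Tendsto (fun n => ∫ x, ⟪D n x, A x⟫ ∂μ) atTop (𝓝 (∫ x, ⟪Dlim x, A x⟫ ∂μ)))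
    (hpf_strong : Tendsto (fun n => eLpNorm (pf n - pflim) 2 μ) atTop (𝓝 0))
    (hlimsup : limsup (fun n => ∫ x, ⟪Z n x, D n x⟫ ∂μ) atTop
      ≤ ∫ x, ⟪Zlim x, Dlim x⟫ ∂μ) :
    ∀ᵐ x ∂μ, max (‖Zlim x‖ - max (ps x - pflim x) 0) 0
      + ‖(‖Dlim x‖) • Zlim x - (max (ps x - pflim x) 0) • Dlim x‖ = 0 := by
  set τ : ℕ → U → ℝ := fun n => yieldStress ps (pf n)
  set σ : U → ℝ := yieldStress ps pflim
  have hτ : ∀ n, MemLp (τ n) 2 μ := fun n => hps_mem.yieldStress (hpf_mem n)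
  have hσ : MemLp σ 2 μ := hps_mem.yieldStress hpflim_mem
  have hσ0 : ∀ᵐ x ∂μ, 0 ≤ σ x := ae_of_all _ (yieldStress_nonneg ps pflim)
  have hτσ : Tendsto (fun n => eLpNorm (τ n - σ) 2 μ) atTop (𝓝 0) :=
    tendsto_eLpNorm_yieldStress_sub hpf_strong
  have hε : ∀ n : ℕ, (0 : ℝ) < 1 / (n + 1) := fun n => by positivity
  have hZτ : ∀ n, ∀ᵐ x ∂μ, ‖Z n x‖ ≤ τ n x := fun n => (hZn n).mono fun x hx =>
    hx ▸ norm_div_norm_add_smul_le (yieldStress_nonneg _ _ x) (hε n) (D n x)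
  have hZD : ∀ n, ∀ᵐ x ∂μ, τ n x * ‖D n x‖ - 1 / (n + 1) * τ n x ≤ ⟪Z n x, D n x⟫ :=
    fun n => (hZn n).mono fun x hx =>
      hx ▸ mul_norm_sub_le_inner_div_norm_add_smul (yieldStress_nonneg _ _ x) (hε n) (D n x)
  have hZσ : ∀ᵐ x ∂μ, ‖Zlim x‖ ≤ σ x := ae_norm_le_of_forall_integral_inner_le hZlim_mem hσ hσ0
    fun _ hA => TendstoWeakL2.integral_inner_le_integral_mul_norm hZ_weak hZ_mem hτ hσ hZτ hτσ hA
  have hlower := integral_mul_norm_le_limsup_integral_inner hZ_weak hD_weak hZ_mem hD_mem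
    hDlim_mem.1 hτ hσ hσ0 hτσ tendsto_one_div_add_atTop_nhds_zero_nat hZD
  have hZD_lim : (fun x => ⟪Zlim x, Dlim x⟫) =ᵐ[μ] fun x => σ x * ‖Dlim x‖ :=
    ae_eq_of_ae_le_of_integral_le (hZlim_mem.integrable_inner hDlim_mem)
      (hσ.integrable_mul hDlim_mem.norm)
      (hZσ.mono fun x hx => (real_inner_le_norm _ _).trans
        (mul_le_mul_of_nonneg_right hx (norm_nonneg _))) (hlower.trans hlimsup)
  filter_upwards [hZσ, hZD_lim] with x hZx hZDx
  change max (‖Zlim x‖ - σ x) 0 + ‖‖Dlim x‖ • Zlim x - σ x • Dlim x‖ = 0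
  rw [max_eq_right (sub_nonpos.2 hZx),
    smul_eq_smul_of_norm_le_of_mul_norm_le_inner hZx hZDx.ge, sub_self, norm_zero, add_zero]

/-- First part of Proposition 3.1 (the convergence lemma).  On a finite measure space `(U, μ)`,
with `p_s ∈ L²` measurable, if `Zⁿ = (p_s − p_fⁿ)⁺ Dⁿ/(|Dⁿ| + 1/n)` a.e., `Zⁿ ⇀ Z` and
`Dⁿ ⇀ D` weakly in `L²(U; M₃)`, `p_fⁿ → p_f` strongly in `L²(U)` and a.e., and
`limsup ∫ Zⁿ : Dⁿ ≤ ∫ Z : D`, then `(|Z| − τ(p_f))⁺ + ||D| Z − τ(p_f) D| = 0` a.e.,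
where `τ(p) := (p_s − p)⁺`.  (Sequences are indexed by `n : ℕ`, the regularization
parameter being `1/(n+1)`.) -/
theorem convergence_lemma_plastic_part
    {U : Type*} [MeasurableSpace U] (μ : Measure U) [IsFiniteMeasure μ]
    (ps : U → ℝ) (hps_meas : Measurable ps) (hps_mem : MemLp ps 2 μ)
    (Z D : ℕ → U → M3) (pf : ℕ → U → ℝ)
    (Zlim Dlim : U → M3) (pflim : U → ℝ)
    (hZ_mem : ∀ n, MemLp (Z n) 2 μ) (hD_mem : ∀ n, MemLp (D n) 2 μ)
    (hpf_mem : ∀ n, MemLp (pf n) 2 μ)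
    (hZlim_mem : MemLp Zlim 2 μ) (hDlim_mem : MemLp Dlim 2 μ)
    (hpflim_mem : MemLp pflim 2 μ)
    (hZn : ∀ n : ℕ, ∀ᵐ x ∂μ,
      Z n x = (max (ps x - pf n x) 0 / (‖D n x‖ + 1 / (n + 1))) • D n x)
    (hZ_weak : ∀ A : U → M3, MemLp A 2 μ →
      Tendsto (fun n => ∫ x, ⟪Z n x, A x⟫ ∂μ) atTop (𝓝 (∫ x, ⟪Zlim x, A x⟫ ∂μ)))
    (hD_weak : ∀ A : U → M3, MemLp A 2 μ →
      Tendsto (fun n => ∫ x, ⟪D n x, A x⟫ ∂μ) atTop (𝓝 (∫ x, ⟪Dlim x, A x⟫ ∂μ)))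
    (hpf_strong : Tendsto (fun n => eLpNorm (pf n - pflim) 2 μ) atTop (𝓝 0))
    (hpf_ae : ∀ᵐ x ∂μ, Tendsto (fun n => pf n x) atTop (𝓝 (pflim x)))
    (hlimsup : limsup (fun n => ∫ x, ⟪Z n x, D n x⟫ ∂μ) atTop
      ≤ ∫ x, ⟪Zlim x, Dlim x⟫ ∂μ) :
    ∀ᵐ x ∂μ, max (‖Zlim x‖ - max (ps x - pflim x) 0) 0
      + ‖(‖Dlim x‖) • Zlim x - (max (ps x - pflim x) 0) • Dlim x‖ = 0 :=
  convergence_lemma_plastic_part_general μ ps hps_mem Z D pf Zlim Dlim pflim hZ_mem hD_mem hpf_mem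
    hZlim_mem hDlim_mem hpflim_mem hZn hZ_weak hD_weak hpf_strong hlimsup
end

section
/- (Minty argument for the full regularized operator, Step 4 of the proof of Proposition 4.1.) Let (U, μ) be a finite measure space, δ ≥ 0, ε > 0, and let p_s, p ∈ L²(U). Define the regularized response 𝒮(p, A) := (p_s − p)⁺ A/(|A| + ε) + (1 − δ/|A|)⁺ A for 3×3 matrices A (with the second term equal to 0 when A = 0). Let S, D ∈ L²(U; M₃) and assume that for every A ∈ L²(U; M₃), ∫_U ( S − 𝒮(p, A) ) : (D − A) dμ ≥ 0. Then S = 𝒮(p, D) a.e. in U. -/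
open MeasureTheory Filter Classical
open scoped RealInnerProductSpace Topology ENNReal

noncomputable def regResponse (δ ε ps p : ℝ) (A : M3) : M3 :=
  (max (ps - p) 0 / (‖A‖ + ε)) • A +
    (if A = 0 then 0 else (max (1 - δ / ‖A‖) 0) • A)

/-!
The response `A ↦ 𝒮(p(x), A)` is continuous and grows at most like `(p_s − p)⁺ + |A|`, so its
Nemytskii operator maps `L²` to `L²` and is hemicontinuous by dominated convergence. Testing the
hypothesis with `A = D − t B` and letting `t → 0⁺` gives `∫ (S − 𝒮(p, D)) : B ≥ 0` for every
`B ∈ L²`; the choices `B = ±(S − 𝒮(p, D))` force `S = 𝒮(p, D)` a.e.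
-/

section Shrinkage

variable {E : Type*} [NormedAddCommGroup E] [NormedSpace ℝ E] {δ : ℝ}

lemma norm_max_one_sub_div_norm_smul_le (hδ : 0 ≤ δ) (A : E) :
    ‖max (1 - δ / ‖A‖) 0 • A‖ ≤ ‖A‖ := by
  have : 0 ≤ δ / ‖A‖ := by positivity
  rw [norm_smul, Real.norm_of_nonneg (le_max_right _ _)]
  exact mul_le_of_le_one_left (norm_nonneg A) (max_le (by linarith) zero_le_one)

lemma continuous_max_one_sub_div_norm_smul (hδ : 0 ≤ δ) :
    Continuous fun A : E => max (1 - δ / ‖A‖) 0 • A := by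
  refine continuous_iff_continuousAt.2 fun A => ?_
  rcases eq_or_ne A 0 with rfl | hA
  · simpa [ContinuousAt] using
      squeeze_zero_norm (norm_max_one_sub_div_norm_smul_le hδ) tendsto_norm_zero
  · exact ((continuousAt_const.sub (continuousAt_const.div continuous_norm.continuousAt
      (norm_ne_zero_iff.2 hA))).max continuousAt_const).smul continuousAt_id

end Shrinkage

section RegResponse

variable {δ ε : ℝ}

-- The `if` is redundant: at `A = 0` the scalar (with the junk value `δ / 0 = 0`) multiplies `0`.
lemma regResponse_eq (δ ε a b : ℝ) (A : M3) :
    regResponse δ ε a b A = (max (a - b) 0 / (‖A‖ + ε)) • A + max (1 - δ / ‖A‖) 0 • A := by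
  unfold regResponse
  split_ifs with hA <;> simp [hA]

lemma norm_regResponse_le (hδ : 0 ≤ δ) (hε : 0 < ε) (a b : ℝ) (A : M3) :
    ‖regResponse δ ε a b A‖ ≤ max (a - b) 0 + ‖A‖ := by
  rw [regResponse_eq]
  refine (norm_add_le _ _).trans (add_le_add ?_ (norm_max_one_sub_div_norm_smul_le hδ A))
  rw [norm_smul, Real.norm_of_nonneg (by positivity), div_mul_eq_mul_div,
    div_le_iff₀ (by positivity)]
  exact mul_le_mul_of_nonneg_left (by linarith) (le_max_right _ _)

lemma continuous_regResponse (hδ : 0 ≤ δ) (hε : 0 < ε) :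
    Continuous fun q : ℝ × ℝ × M3 => regResponse δ ε q.1 q.2.1 q.2.2 := by
  simp_rw [regResponse_eq]
  refine .add (.fun_smul ?_ (continuous_snd.comp continuous_snd))
    ((continuous_max_one_sub_div_norm_smul hδ).comp (continuous_snd.comp continuous_snd))
  exact .div (by fun_prop) (by fun_prop) fun q => by positivity

end RegResponse

lemma norm_inner_sub_apply_sub_smul_le {E : Type*} [NormedAddCommGroup E] [InnerProductSpace ℝ E]
    {F : E → E} {c : ℝ} (hF : ∀ A, ‖F A‖ ≤ c + ‖A‖) (S D B : E) {t : ℝ} (ht : t ∈ Set.Ioc 0 1) :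
    ‖⟪S - F (D - t • B), B⟫‖ ≤ (‖S‖ + c + ‖D‖ + ‖B‖) * ‖B‖ := by
  have htB : ‖t • B‖ ≤ ‖B‖ := by
    rw [norm_smul, Real.norm_of_nonneg ht.1.le]
    exact mul_le_of_le_one_left (norm_nonneg B) ht.2
  calc ‖⟪S - F (D - t • B), B⟫‖ ≤ ‖S - F (D - t • B)‖ * ‖B‖ := norm_inner_le_norm _ _
    _ ≤ (‖S‖ + (c + (‖D‖ + ‖t • B‖))) * ‖B‖ := by
      gcongr
      exact (norm_sub_le _ _).trans
        (add_le_add_right ((hF _).trans (add_le_add_right (norm_sub_le _ _) _)) _)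
    _ ≤ (‖S‖ + c + ‖D‖ + ‖B‖) * ‖B‖ := by gcongr ?_ * _; linarith

section Minty

variable {U E : Type*} [MeasurableSpace U] {μ : Measure U} [NormedAddCommGroup E]
  {f : U → E → E} {g : U → ℝ}

lemma MeasureTheory.MemLp.comp_of_norm_le_add_norm {p : ℝ≥0∞} (hg : MemLp g p μ)
    (hf_meas : ∀ A : U → E, AEStronglyMeasurable A μ →
      AEStronglyMeasurable (fun x => f x (A x)) μ)
    (hf_le : ∀ x A, ‖f x A‖ ≤ g x + ‖A‖) {A : U → E} (hA : MemLp A p μ) :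
    MemLp (fun x => f x (A x)) p μ :=
  (hg.add hA.norm).of_le (hf_meas A hA.aestronglyMeasurable)
    (ae_of_all _ fun x => (hf_le x (A x)).trans (le_abs_self _))

variable [InnerProductSpace ℝ E]

theorem MeasureTheory.MemLp.integrable_inner_s11 {f g : U → E} (hf : MemLp f 2 μ)
    (hg : MemLp g 2 μ) : Integrable (fun x => ⟪f x, g x⟫) μ := by
  refine (hf.norm.integrable_mul hg.norm).mono
    (hf.aestronglyMeasurable.inner hg.aestronglyMeasurable) (ae_of_all _ fun x => ?_)
  simpa using abs_real_inner_le_norm (f x) (g x)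

lemma ae_eq_zero_of_forall_integral_inner_nonneg {G : U → E} (hG : MemLp G 2 μ)
    (h : ∀ B : U → E, MemLp B 2 μ → 0 ≤ ∫ x, ⟪G x, B x⟫ ∂μ) : G =ᵐ[μ] 0 := by
  have hnonpos : ∫ x, ⟪G x, G x⟫ ∂μ ≤ 0 := by
    simpa only [Pi.neg_apply, inner_neg_right, integral_neg, neg_nonneg] using h _ hG.neg
  have hzero := (integral_eq_zero_iff_of_nonneg (fun x => real_inner_self_nonneg)
    (hG.integrable_inner_s11 hG)).1 (le_antisymm hnonpos (h _ hG))
  filter_upwards [hzero] with x hx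
  exact inner_self_eq_zero.1 hx

lemma integral_inner_sub_nonneg_of_minty (hg : MemLp g 2 μ)
    (hf_cont : ∀ x, Continuous (f x))
    (hf_meas : ∀ A : U → E, AEStronglyMeasurable A μ →
      AEStronglyMeasurable (fun x => f x (A x)) μ)
    (hf_le : ∀ x A, ‖f x A‖ ≤ g x + ‖A‖) {S D : U → E} (hS : MemLp S 2 μ) (hD : MemLp D 2 μ)
    (h : ∀ A : U → E, MemLp A 2 μ → 0 ≤ ∫ x, ⟪S x - f x (A x), D x - A x⟫ ∂μ)
    {B : U → E} (hB : MemLp B 2 μ) :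
    0 ≤ ∫ x, ⟪S x - f x (D x), B x⟫ ∂μ := by
  have hD_sub (t : ℝ) : MemLp (fun x => D x - t • B x) 2 μ := hD.sub (hB.const_smul t)
  have hnonneg : ∀ t > (0 : ℝ), 0 ≤ ∫ x, ⟪S x - f x (D x - t • B x), B x⟫ ∂μ := by
    intro t ht
    have := h _ (hD_sub t)
    simp_rw [sub_sub_cancel, real_inner_smul_right, integral_const_mul] at this
    exact nonneg_of_mul_nonneg_right this ht
  have hlim : Tendsto (fun t : ℝ => ∫ x, ⟪S x - f x (D x - t • B x), B x⟫ ∂μ) (𝓝[>] 0)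
      (𝓝 (∫ x, ⟪S x - f x (D x), B x⟫ ∂μ)) := by
    refine tendsto_integral_filter_of_dominated_convergence
      (fun x => (‖S x‖ + g x + ‖D x‖ + ‖B x‖) * ‖B x‖)
      (Eventually.of_forall fun t => (hS.aestronglyMeasurable.sub
        (hf_meas _ (hD_sub t).aestronglyMeasurable)).inner hB.aestronglyMeasurable)
      ?_ ((((hS.norm.add hg).add hD.norm).add hB.norm).integrable_mul hB.norm)
      (ae_of_all _ fun x => ?_)
    · filter_upwards [Ioc_mem_nhdsGT zero_lt_one] with t ht
      exact ae_of_all _ fun x => norm_inner_sub_apply_sub_smul_le (hf_le x) (S x) (D x) (B x) ht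
    · have hA : Tendsto (fun t : ℝ => D x - t • B x) (𝓝[>] 0) (𝓝 (D x)) := by
        have hcont : Continuous fun t : ℝ => D x - t • B x := by fun_prop
        simpa using (hcont.tendsto 0).mono_left nhdsWithin_le_nhds
      exact (tendsto_const_nhds.sub ((hf_cont x).continuousAt.tendsto.comp hA)).inner
        tendsto_const_nhds
  exact ge_of_tendsto hlim (eventually_nhdsWithin_of_forall hnonneg)

theorem ae_eq_of_minty (hg : MemLp g 2 μ) (hf_cont : ∀ x, Continuous (f x))
    (hf_meas : ∀ A : U → E, AEStronglyMeasurable A μ →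
      AEStronglyMeasurable (fun x => f x (A x)) μ)
    (hf_le : ∀ x A, ‖f x A‖ ≤ g x + ‖A‖) {S D : U → E} (hS : MemLp S 2 μ) (hD : MemLp D 2 μ)
    (h : ∀ A : U → E, MemLp A 2 μ → 0 ≤ ∫ x, ⟪S x - f x (A x), D x - A x⟫ ∂μ) :
    ∀ᵐ x ∂μ, S x = f x (D x) := by
  have hG := hS.sub (hg.comp_of_norm_le_add_norm hf_meas hf_le hD)
  filter_upwards [ae_eq_zero_of_forall_integral_inner_nonneg hG fun B hB =>
    integral_inner_sub_nonneg_of_minty hg hf_cont hf_meas hf_le hS hD h hB] with x hx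
  exact sub_eq_zero.1 hx

end Minty

theorem minty_full_regularized_operator_general
    {U : Type*} [MeasurableSpace U] (μ : Measure U)
    (δ ε : ℝ) (hδ : 0 ≤ δ) (hε : 0 < ε)
    (ps p : U → ℝ) (hps_mem : MemLp ps 2 μ) (hp_mem : MemLp p 2 μ)
    (S D : U → M3) (hS_mem : MemLp S 2 μ) (hD_mem : MemLp D 2 μ)
    (h : ∀ A : U → M3, MemLp A 2 μ →
      0 ≤ ∫ x, ⟪S x - regResponse δ ε (ps x) (p x) (A x), D x - A x⟫ ∂μ) :
    ∀ᵐ x ∂μ, S x = regResponse δ ε (ps x) (p x) (D x) := by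
  have hcont := continuous_regResponse hδ hε
  have hg : MemLp (fun x => max (ps x - p x) 0) 2 μ := (hps_mem.sub hp_mem).sup MemLp.zero
  exact ae_eq_of_minty (f := fun x A => regResponse δ ε (ps x) (p x) A) hg
    (fun x => hcont.comp (continuous_const.prodMk (continuous_const.prodMk continuous_id)))
    (fun A hA => hcont.comp_aestronglyMeasurable (f := fun x => (ps x, p x, A x))
      (hps_mem.aestronglyMeasurable.prodMk (hp_mem.aestronglyMeasurable.prodMk hA)))
    (fun x A => norm_regResponse_le hδ hε _ _ A) hS_mem hD_mem h

/-- Minty argument for the full regularized operator (Step 4 of the proof of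
Proposition 4.1): on a finite measure space, with `δ ≥ 0`, `ε > 0`, `p_s, p ∈ L²(U)`,
if `S, D ∈ L²(U; M₃)` and `∫ (S − 𝒮(p, A)) : (D − A) dμ ≥ 0` for every `A ∈ L²(U; M₃)`,
then `S = 𝒮(p, D)` a.e. in `U`. -/
theorem minty_full_regularized_operator
    {U : Type*} [MeasurableSpace U] (μ : Measure U) [IsFiniteMeasure μ]
    (δ ε : ℝ) (hδ : 0 ≤ δ) (hε : 0 < ε)
    (ps p : U → ℝ) (hps_mem : MemLp ps 2 μ) (hp_mem : MemLp p 2 μ)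
    (S D : U → M3) (hS_mem : MemLp S 2 μ) (hD_mem : MemLp D 2 μ)
    (h : ∀ A : U → M3, MemLp A 2 μ →
      0 ≤ ∫ x, ⟪S x - regResponse δ ε (ps x) (p x) (A x), D x - A x⟫ ∂μ) :
    ∀ᵐ x ∂μ, S x = regResponse δ ε (ps x) (p x) (D x) :=
  minty_full_regularized_operator_general μ δ ε hδ hε ps p hps_mem hp_mem S D hS_mem hD_mem h
end

section
/- (Vanishing of the negative part, claim (5.19)/(6.60).) Let (U, μ) be a finite measure space and p_s ∈ L²(U) measurable; set τ(p) := (p_s − p)⁺. Let {p_fⁿ} ⊂ L²(U) with p_fⁿ → p_f strongly in L²(U), and let {Dⁿ} ⊂ L²(U; M₃) be bounded in L²(U; M₃) and D ∈ L²(U; M₃). Define Zⁿ := τ(p_fⁿ) Dⁿ/(|Dⁿ| + 1/n) a.e., and define Z̄ := 0 on the set where D = 0 and Z̄ := τ(p_f) D/|D| on the set where D ≠ 0. Then the negative parts satisfy ( (Zⁿ − Z̄) : (Dⁿ − D) )⁻ → 0 strongly in L¹(U), where x⁻ := max(−x, 0). -/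
open MeasureTheory Filter Classical
open scoped RealInnerProductSpace Topology ENNReal

/-!
Write `a = τ(p_fⁿ)`, `b = τ(p_f)`, `u = Dⁿ/(|Dⁿ| + ε)` and `v = D/|D|` (`v = 0` where `D = 0`).
Both are approximate subgradients of the norm: `|u|, |v| ≤ 1`, `u : Dⁿ ≥ |Dⁿ| − ε` and
`v : D = |D|`, so `(u − v) : (Dⁿ − D) ≥ −ε`. Splitting `a u − b v = a (u − v) + (a − b) v`
and using that `τ` is 1-Lipschitz and `ε ≤ 1` gives pointwise
`((Zⁿ − Z̄) : (Dⁿ − D))⁻ ≤ |p_fⁿ − p_f| (|Dⁿ − D| + 1) + ε τ(p_f)`.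
By Hölder the first term has `L¹` norm at most `‖p_fⁿ − p_f‖₂ ‖|Dⁿ − D| + 1‖₂ → 0`, because
`Dⁿ` is bounded in `L²` and `μ` is finite; the second has `L¹` norm `ε ‖τ(p_f)‖₁ → 0`.
-/

section InnerProduct

variable {E : Type*} [NormedAddCommGroup E] [InnerProductSpace ℝ E]

lemma norm_inv_norm_add_smul_le_one {ε : ℝ} (hε : 0 ≤ ε) (A : E) :
    ‖(‖A‖ + ε)⁻¹ • A‖ ≤ 1 := by
  rw [norm_smul, norm_inv, Real.norm_of_nonneg (by positivity)]
  exact inv_mul_le_one_of_le₀ (le_add_of_nonneg_right hε) (by positivity)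

lemma norm_sub_le_inner_inv_norm_add_smul {ε : ℝ} (hε : 0 ≤ ε) (A : E) :
    ‖A‖ - ε ≤ ⟪(‖A‖ + ε)⁻¹ • A, A⟫ := by
  rw [real_inner_smul_left, real_inner_self_eq_norm_sq]
  rcases (add_nonneg (norm_nonneg A) hε).eq_or_lt with h | h
  · have hA : ‖A‖ = 0 := by linarith [norm_nonneg A]
    simp [hA, show ε = 0 by linarith]
  · rw [inv_mul_eq_div, le_div_iff₀ h]
    nlinarith

lemma neg_add_le_inner_sub_sub {ε ε' : ℝ} {u v A B : E} (hu : ‖u‖ ≤ 1) (hv : ‖v‖ ≤ 1)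
    (huA : ‖A‖ - ε ≤ ⟪u, A⟫) (hvB : ‖B‖ - ε' ≤ ⟪v, B⟫) :
    -(ε + ε') ≤ ⟪u - v, A - B⟫ := by
  have huB : ⟪u, B⟫ ≤ ‖B‖ :=
    (real_inner_le_norm u B).trans (mul_le_of_le_one_left (norm_nonneg B) hu)
  have hvA : ⟪v, A⟫ ≤ ‖A‖ :=
    (real_inner_le_norm v A).trans (mul_le_of_le_one_left (norm_nonneg A) hv)
  simp only [inner_sub_left, inner_sub_right]
  linarith

lemma neg_inner_smul_sub_smul_le {a b ε : ℝ} (ha : 0 ≤ a) {u v A B : E} (hv : ‖v‖ ≤ 1)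
    (huv : -ε ≤ ⟪u - v, A - B⟫) :
    -⟪a • u - b • v, A - B⟫ ≤ |a - b| * ‖A - B‖ + a * ε := by
  have hsplit : a • u - b • v = a • (u - v) + (a - b) • v := by
    simp only [smul_sub, sub_smul]; abel
  have hfirst : -(a * ε) ≤ a * ⟪u - v, A - B⟫ := by
    simpa only [mul_neg] using mul_le_mul_of_nonneg_left huv ha
  have hsecond : -(|a - b| * ‖A - B‖) ≤ (a - b) * ⟪v, A - B⟫ := by
    have hv' : |⟪v, A - B⟫| ≤ ‖A - B‖ :=
      (abs_real_inner_le_norm v _).trans (mul_le_of_le_one_left (norm_nonneg _) hv)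
    calc -(|a - b| * ‖A - B‖) ≤ -|(a - b) * ⟪v, A - B⟫| := by
          rw [abs_mul]; exact neg_le_neg (mul_le_mul_of_nonneg_left hv' (abs_nonneg _))
      _ ≤ _ := neg_abs_le _
  rw [hsplit, inner_add_left, real_inner_smul_left, real_inner_smul_left]
  linarith

lemma max_neg_inner_div_norm_add_sub_le [DecidableEq E] (s p q : ℝ) {ε : ℝ} (hε₀ : 0 ≤ ε)
    (hε₁ : ε ≤ 1) (A B : E) :
    max (-⟪(max (s - p) 0 / (‖A‖ + ε)) • A -
        (if B = 0 then 0 else (max (s - q) 0 / ‖B‖) • B), A - B⟫) 0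
      ≤ |p - q| * (‖A - B‖ + 1) + ε * max (s - q) 0 := by
  set a := max (s - p) 0
  set b := max (s - q) 0
  -- `0⁻¹ = 0` makes the case split in `Z̄` redundant.
  have hB : (if B = 0 then 0 else (b / ‖B‖) • B) = b • (‖B‖ + 0)⁻¹ • B := by
    split_ifs with h <;> simp [h, div_eq_mul_inv, mul_smul]
  have hab : |a - b| ≤ |p - q| := by
    simpa only [sub_sub_sub_cancel_left, abs_sub_comm] using
      abs_max_sub_max_le_abs (s - p) (s - q) 0
  have hmono := neg_add_le_inner_sub_sub (norm_inv_norm_add_smul_le_one hε₀ A)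
    (norm_inv_norm_add_smul_le_one le_rfl B) (norm_sub_le_inner_inv_norm_add_smul hε₀ A)
    (norm_sub_le_inner_inv_norm_add_smul le_rfl B)
  rw [add_zero] at hmono
  have hmain := neg_inner_smul_sub_smul_le (le_max_right (s - p) 0) (b := b)
    (norm_inv_norm_add_smul_le_one le_rfl B) hmono
  rw [hB, div_eq_mul_inv, mul_smul]
  refine max_le (hmain.trans ?_) (by positivity)
  have ha : a ≤ b + |p - q| := by linarith [le_abs_self (a - b)]
  nlinarith [norm_nonneg (A - B), abs_nonneg (a - b)]

end InnerProduct

lemma tendsto_eLpNorm_one_of_norm_le_mul_add_mul {α E F G H : Type*} {m : MeasurableSpace α}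
    {μ : Measure α} [NormedAddCommGroup E] [NormedAddCommGroup F] [NormedAddCommGroup G]
    [NormedAddCommGroup H] {f : ℕ → α → E} {δ : ℕ → α → F} {g : ℕ → α → G} {h : α → H}
    {ε : ℕ → ℝ} {C : ℝ≥0∞} (hδ_meas : ∀ n, AEStronglyMeasurable (δ n) μ)
    (hg_meas : ∀ n, AEStronglyMeasurable (g n) μ)
    (hδ : Tendsto (fun n => eLpNorm (δ n) 2 μ) atTop (𝓝 0))
    (hg : ∀ n, eLpNorm (g n) 2 μ ≤ C) (hC : C ≠ ⊤) (hh : MemLp h 1 μ)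
    (hε : Tendsto ε atTop (𝓝 0))
    (hf : ∀ n, ∀ᵐ x ∂μ, ‖f n x‖ ≤ ‖δ n x‖ * ‖g n x‖ + ε n * ‖h x‖) :
    Tendsto (fun n => eLpNorm (f n) 1 μ) atTop (𝓝 0) := by
  have hbound : ∀ n, eLpNorm (f n) 1 μ ≤ eLpNorm (δ n) 2 μ * C + ‖ε n‖ₑ * eLpNorm h 1 μ := by
    intro n
    calc eLpNorm (f n) 1 μ
        ≤ eLpNorm (fun x => ‖δ n x‖ * ‖g n x‖ + ε n * ‖h x‖) 1 μ :=
          eLpNorm_mono_ae_real ((hf n).mono fun x hx => hx)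
      _ ≤ eLpNorm (fun x => ‖δ n x‖ * ‖g n x‖) 1 μ + eLpNorm (fun x => ε n * ‖h x‖) 1 μ :=
          eLpNorm_add_le ((hδ_meas n).norm.mul (hg_meas n).norm)
            (aestronglyMeasurable_const.mul hh.1.norm) le_rfl
      _ ≤ 1 * eLpNorm (δ n) 2 μ * eLpNorm (g n) 2 μ + ‖ε n‖ₑ * eLpNorm h 1 μ := by
          gcongr
          · exact eLpNorm_le_eLpNorm_mul_eLpNorm'_of_norm (hδ_meas n) (hg_meas n)
              (fun u v => ‖u‖ * ‖v‖) 1 (.of_forall fun x => by simp)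
          · rw [← eLpNorm_norm h]; exact (eLpNorm_const_smul (ε n) _ 1 μ).le
      _ ≤ eLpNorm (δ n) 2 μ * C + ‖ε n‖ₑ * eLpNorm h 1 μ := by
          rw [one_mul]; gcongr; exact hg n
  have hlim :
      Tendsto (fun n => eLpNorm (δ n) 2 μ * C + ‖ε n‖ₑ * eLpNorm h 1 μ) atTop (𝓝 0) := by
    have hε' : Tendsto (fun n => ‖ε n‖ₑ) atTop (𝓝 0) := by
      simpa [Function.comp_def] using (continuous_enorm.tendsto (0 : ℝ)).comp hε
    simpa using (ENNReal.Tendsto.mul_const hδ (Or.inr hC)).add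
      (ENNReal.Tendsto.mul_const hε' (Or.inr hh.eLpNorm_ne_top))
  exact tendsto_of_tendsto_of_tendsto_of_le_of_le tendsto_const_nhds hlim (fun _ => zero_le)
    hbound

lemma eLpNorm_norm_sub_add_one_le {α E : Type*} {m : MeasurableSpace α} {μ : Measure α}
    [NormedAddCommGroup E] {f g : α → E} {p : ℝ≥0∞} (hf : AEStronglyMeasurable f μ)
    (hg : AEStronglyMeasurable g μ) (hp : 1 ≤ p) :
    eLpNorm (fun x => ‖f x - g x‖ + 1) p μ
      ≤ eLpNorm f p μ + eLpNorm g p μ + eLpNorm (fun _ => (1 : ℝ)) p μ := by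
  calc eLpNorm (fun x => ‖f x - g x‖ + 1) p μ
      ≤ eLpNorm (fun x => ‖f x - g x‖) p μ + eLpNorm (fun _ => (1 : ℝ)) p μ :=
        eLpNorm_add_le (hf.sub hg).norm aestronglyMeasurable_const hp
    _ ≤ eLpNorm f p μ + eLpNorm g p μ + eLpNorm (fun _ => (1 : ℝ)) p μ := by
        rw [eLpNorm_norm (f := fun x => f x - g x)]
        gcongr
        exact eLpNorm_sub_le hf hg hp

theorem negative_part_vanishes_general
    {U : Type*} [MeasurableSpace U] (μ : Measure U) [IsFiniteMeasure μ]
    (ps : U → ℝ) (hps_mem : MemLp ps 2 μ)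
    (pf : ℕ → U → ℝ) (pflim : U → ℝ)
    (hpf_mem : ∀ n, MemLp (pf n) 2 μ) (hpflim_mem : MemLp pflim 2 μ)
    (hpf_strong : Tendsto (fun n => eLpNorm (pf n - pflim) 2 μ) atTop (𝓝 0))
    (D : ℕ → U → M3) (Dlim : U → M3)
    (hD_mem : ∀ n, MemLp (D n) 2 μ) (hDlim_mem : MemLp Dlim 2 μ)
    (CD : ℝ≥0∞) (hCD : CD ≠ ⊤) (hD_bdd : ∀ n, eLpNorm (D n) 2 μ ≤ CD) :
    Tendsto (fun n =>
      eLpNorm (fun x =>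
        max (-(⟪(max (ps x - pf n x) 0 / (‖D n x‖ + 1 / (n + 1))) • D n x -
                (if Dlim x = 0 then 0
                  else (max (ps x - pflim x) 0 / ‖Dlim x‖) • Dlim x),
              D n x - Dlim x⟫)) 0) 1 μ)
      atTop (𝓝 0) := by
  refine tendsto_eLpNorm_one_of_norm_le_mul_add_mul (δ := fun n => pf n - pflim)
    (g := fun n x => ‖D n x - Dlim x‖ + 1) (h := fun x => max (ps x - pflim x) 0)
    (ε := fun n : ℕ => 1 / ((n : ℝ) + 1))
    (C := CD + eLpNorm Dlim 2 μ + eLpNorm (fun _ => (1 : ℝ)) 2 μ)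
    (fun n => (hpf_mem n).1.sub hpflim_mem.1)
    (fun n => ((hD_mem n).1.sub hDlim_mem.1).norm.add aestronglyMeasurable_const) hpf_strong
    (fun n => (eLpNorm_norm_sub_add_one_le (hD_mem n).1 hDlim_mem.1 one_le_two).trans
      (by gcongr; exact hD_bdd n))
    (by finiteness [hCD, hDlim_mem.eLpNorm_ne_top,
      (memLp_const (μ := μ) (p := 2) (1 : ℝ)).eLpNorm_ne_top])
    ((hps_mem.sub hpflim_mem).pos_part.mono_exponent one_le_two)
    tendsto_one_div_add_atTop_nhds_zero_nat (fun n => .of_forall fun x => ?_)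
  have hε₁ : 1 / ((n : ℝ) + 1) ≤ 1 :=
    div_le_one_of_le₀ (le_add_of_nonneg_left n.cast_nonneg) (by positivity)
  rw [Real.norm_of_nonneg (le_max_right _ 0), Real.norm_of_nonneg (le_max_right _ 0),
    Real.norm_of_nonneg (by positivity : 0 ≤ ‖D n x - Dlim x‖ + 1), Pi.sub_apply,
    Real.norm_eq_abs]
  exact max_neg_inner_div_norm_add_sub_le (ps x) (pf n x) (pflim x) (by positivity) hε₁
    (D n x) (Dlim x)

/-- Vanishing of the negative part (claim (5.19)/(6.60)): on a finite measure space, with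
`τ(p) := (p_s − p)⁺`, if `p_fⁿ → p_f` strongly in `L²(U)`, `{Dⁿ}` is bounded in
`L²(U; M₃)`, `Zⁿ := τ(p_fⁿ) Dⁿ/(|Dⁿ| + 1/n)`, and `Z̄ := 0` where `D = 0`,
`Z̄ := τ(p_f) D/|D|` where `D ≠ 0`, then `((Zⁿ − Z̄) : (Dⁿ − D))⁻ → 0` strongly in
`L¹(U)`.  (Sequences are indexed by `n : ℕ`, the regularization parameter being
`1/(n+1)`.) -/
theorem negative_part_vanishes
    {U : Type*} [MeasurableSpace U] (μ : Measure U) [IsFiniteMeasure μ]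
    (ps : U → ℝ) (hps_meas : Measurable ps) (hps_mem : MemLp ps 2 μ)
    (pf : ℕ → U → ℝ) (pflim : U → ℝ)
    (hpf_mem : ∀ n, MemLp (pf n) 2 μ) (hpflim_mem : MemLp pflim 2 μ)
    (hpf_strong : Tendsto (fun n => eLpNorm (pf n - pflim) 2 μ) atTop (𝓝 0))
    (D : ℕ → U → M3) (Dlim : U → M3)
    (hD_mem : ∀ n, MemLp (D n) 2 μ) (hDlim_mem : MemLp Dlim 2 μ)
    (CD : ℝ≥0∞) (hCD : CD ≠ ⊤) (hD_bdd : ∀ n, eLpNorm (D n) 2 μ ≤ CD) :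
    Tendsto (fun n =>
      eLpNorm (fun x =>
        max (-(⟪(max (ps x - pf n x) 0 / (‖D n x‖ + 1 / (n + 1))) • D n x -
                (if Dlim x = 0 then 0
                  else (max (ps x - pflim x) 0 / ‖Dlim x‖) • Dlim x),
              D n x - Dlim x⟫)) 0) 1 μ)
      atTop (𝓝 0) :=
  negative_part_vanishes_general μ ps hps_mem pf pflim hpf_mem hpflim_mem hpf_strong D Dlim hD_mem
    hDlim_mem CD hCD hD_bdd
end

section
/- (Monotonicity and implicit relation on the boundary, vector versions of (monSp1), (monSp2) and (2.10).) Let s_* ≥ 0, β_* ≥ 0 and ε > 0 be real numbers. Then: (i) for all u, w ∈ ℝ³, ( s_* u/(|u| + ε) − s_* w/(|w| + ε) ) · (u − w) ≥ 0; (ii) for all u, w ∈ ℝ³, ( g(u) − g(w) ) · (u − w) ≥ 0, where g(u) := (1 − β_*/|u|)⁺ u for u ≠ 0 and g(0) := 0; (iii) for z, v ∈ ℝ³, the relation (|z| − s_*)⁺ + | |v| z − s_* v | = 0 holds if and only if (v = 0 implies |z| ≤ s_*) and (v ≠ 0 implies z = s_* v/|v|). -/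
/-!
A radial map `u ↦ φ(|u|) u` with `φ ≥ 0` is monotone as soon as `r ↦ r φ(r)` is nondecreasing:
by Cauchy–Schwarz, `⟪a u - b w, u - w⟫ ≥ a|u|² + b|w|² - (a + b)|u||w| = (a|u| - b|w|)(|u| - |w|)`.
Both (i) and (ii) are of this form, with `r φ(r) = s r / (r + ε)` and `r φ(r) = (r - β)⁺`.
For (iii), a sum of two nonnegative terms vanishes iff both do, and `|v| z = s v` pins down
`z = s v / |v|` when `v ≠ 0`, a vector which then has norm `s`.
-/

open Classical
open scoped RealInnerProductSpace

/-- `ℝ³` with the Euclidean inner product. -/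
abbrev V3 := EuclideanSpace ℝ (Fin 3)

theorem monotoneOn_mul_div_add {s ε : ℝ} (hs : 0 ≤ s) (hε : 0 < ε) :
    MonotoneOn (fun r ↦ r * (s / (r + ε))) (Set.Ici 0) := by
  intro x hx y hy hxy
  simp only [Set.mem_Ici] at hx hy
  have hfrac : x / (x + ε) ≤ y / (y + ε) := by
    rw [div_le_div_iff₀ (by positivity) (by positivity)]
    nlinarith
  calc x * (s / (x + ε)) = s * (x / (x + ε)) := by ring
    _ ≤ s * (y / (y + ε)) := by gcongr
    _ = y * (s / (y + ε)) := by ring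

theorem mul_max_one_sub_div {r : ℝ} (hr : r ≠ 0) (hr0 : 0 ≤ r) (β : ℝ) :
    r * max (1 - β / r) 0 = max (r - β) 0 := by
  rw [mul_max_of_nonneg _ _ hr0, mul_sub, mul_one, mul_div_cancel₀ _ hr, mul_zero]

theorem monotoneOn_mul_shrink (β : ℝ) :
    MonotoneOn (fun r ↦ r * if r = 0 then 0 else max (1 - β / r) 0) (Set.Ici 0) := by
  intro x hx y hy hxy
  simp only [Set.mem_Ici] at hx hy
  rcases eq_or_ne x 0 with rfl | hx0
  · simp only [if_true, mul_zero]
    split_ifs with hy0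
    · simp
    · rw [mul_max_one_sub_div hy0 hy]
      exact le_max_right _ _
  · have hy0 : y ≠ 0 := (lt_of_lt_of_le (lt_of_le_of_ne hx (Ne.symm hx0)) hxy).ne'
    simp only [hx0, hy0, if_false, mul_max_one_sub_div hx0 hx, mul_max_one_sub_div hy0 hy]
    gcongr

section NormedSpace

variable {E : Type*} [NormedAddCommGroup E] [NormedSpace ℝ E]

theorem ite_eq_zero_smul [DecidableEq E] (u : E) (c : ℝ) :
    (if u = 0 then 0 else c • u) = (if ‖u‖ = 0 then 0 else c) • u := by
  by_cases hu : u = 0 <;> simp [hu]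

theorem norm_smul_eq_smul_iff {z v : E} (hv : v ≠ 0) (s : ℝ) :
    ‖v‖ • z = s • v ↔ z = (s / ‖v‖) • v := by
  rw [← eq_inv_smul_iff₀ (norm_ne_zero_iff.2 hv), smul_smul, inv_mul_eq_div]

theorem max_norm_sub_zero_add_norm_smul_sub_smul_eq_zero_iff {s : ℝ} (hs : 0 ≤ s) (z v : E) :
    max (‖z‖ - s) 0 + ‖‖v‖ • z - s • v‖ = 0 ↔ (v = 0 → ‖z‖ ≤ s) ∧ (v ≠ 0 → z = (s / ‖v‖) • v) := by
  rw [add_eq_zero_iff_of_nonneg (le_max_right _ _) (norm_nonneg _), max_eq_right_iff, sub_nonpos,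
    norm_eq_zero, sub_eq_zero]
  rcases eq_or_ne v 0 with rfl | hv
  · simp
  · simp only [hv, norm_smul_eq_smul_iff hv, IsEmpty.forall_iff, true_and, ne_eq, not_false_eq_true,
      forall_const]
    refine and_iff_right_of_imp ?_
    rintro rfl
    rw [norm_smul, Real.norm_of_nonneg (by positivity), div_mul_cancel₀ _ (norm_ne_zero_iff.2 hv)]

end NormedSpace

section InnerProductSpace

variable {E : Type*} [NormedAddCommGroup E] [InnerProductSpace ℝ E]

theorem real_inner_smul_sub_smul_nonneg {u w : E} {a b : ℝ} (ha : 0 ≤ a) (hb : 0 ≤ b)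
    (h : 0 ≤ (a * ‖u‖ - b * ‖w‖) * (‖u‖ - ‖w‖)) : 0 ≤ ⟪a • u - b • w, u - w⟫ :=
  calc 0 ≤ (a * ‖u‖ - b * ‖w‖) * (‖u‖ - ‖w‖) := h
    _ = a * ‖u‖ ^ 2 + b * ‖w‖ ^ 2 - (a + b) * (‖u‖ * ‖w‖) := by ring
    _ ≤ a * ‖u‖ ^ 2 + b * ‖w‖ ^ 2 - (a + b) * ⟪u, w⟫ := by
      gcongr
      exact real_inner_le_norm u w
    _ = ⟪a • u - b • w, u - w⟫ := by
      simp only [inner_sub_left, inner_sub_right, real_inner_smul_left, real_inner_self_eq_norm_sq,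
        real_inner_comm u w]
      ring

theorem real_inner_radial_sub_radial_nonneg {φ : ℝ → ℝ} (hφ : ∀ r, 0 ≤ r → 0 ≤ φ r)
    (hmono : MonotoneOn (fun r ↦ r * φ r) (Set.Ici 0)) (u w : E) :
    0 ≤ ⟪φ ‖u‖ • u - φ ‖w‖ • w, u - w⟫ := by
  refine real_inner_smul_sub_smul_nonneg (hφ _ (norm_nonneg u)) (hφ _ (norm_nonneg w)) ?_
  have := (monovaryOn_id_iff.2 hmono).sub_mul_sub_nonneg
    (Set.mem_Ici.2 (norm_nonneg w)) (Set.mem_Ici.2 (norm_nonneg u))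
  simpa only [mul_comm _ ‖u‖, mul_comm _ ‖w‖, id] using this

end InnerProductSpace

theorem boundary_monotonicity_and_implicit_relation_general
    (s β ε : ℝ) (hs : 0 ≤ s) (hε : 0 < ε) :
    (∀ u w : V3, 0 ≤ ⟪(s / (‖u‖ + ε)) • u - (s / (‖w‖ + ε)) • w, u - w⟫) ∧
    (∀ u w : V3,
      0 ≤ ⟪(if u = 0 then 0 else (max (1 - β / ‖u‖) 0) • u) -
            (if w = 0 then 0 else (max (1 - β / ‖w‖) 0) • w), u - w⟫) ∧
    (∀ z v : V3,
      max (‖z‖ - s) 0 + ‖(‖v‖) • z - s • v‖ = 0 ↔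
        ((v = 0 → ‖z‖ ≤ s) ∧ (v ≠ 0 → z = (s / ‖v‖) • v))) := by
  refine ⟨fun u w ↦ ?_, fun u w ↦ ?_, max_norm_sub_zero_add_norm_smul_sub_smul_eq_zero_iff hs⟩
  · exact real_inner_radial_sub_radial_nonneg (fun r hr ↦ by positivity)
      (monotoneOn_mul_div_add hs hε) u w
  · rw [ite_eq_zero_smul u, ite_eq_zero_smul w]
    refine real_inner_radial_sub_radial_nonneg (fun r _ ↦ ?_) (monotoneOn_mul_shrink β) u w
    split_ifs
    exacts [le_rfl, le_max_right _ _]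

/-- Monotonicity and implicit relation on the boundary (vector versions of (monSp1),
(monSp2) and (2.10)): for `s_* ≥ 0`, `β_* ≥ 0`, `ε > 0`,
(i) `(s_* u/(|u|+ε) − s_* w/(|w|+ε)) · (u − w) ≥ 0` for all `u, w ∈ ℝ³`;
(ii) `(g(u) − g(w)) · (u − w) ≥ 0` where `g(u) := (1 − β_*/|u|)⁺ u` for `u ≠ 0`,
`g(0) := 0`;
(iii) `(|z| − s_*)⁺ + ||v| z − s_* v| = 0` iff (`v = 0 → |z| ≤ s_*`) and
(`v ≠ 0 → z = s_* v/|v|`). -/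
theorem boundary_monotonicity_and_implicit_relation
    (s β ε : ℝ) (hs : 0 ≤ s) (hβ : 0 ≤ β) (hε : 0 < ε) :
    (∀ u w : V3, 0 ≤ ⟪(s / (‖u‖ + ε)) • u - (s / (‖w‖ + ε)) • w, u - w⟫) ∧
    (∀ u w : V3,
      0 ≤ ⟪(if u = 0 then 0 else (max (1 - β / ‖u‖) 0) • u) -
            (if w = 0 then 0 else (max (1 - β / ‖w‖) 0) • w), u - w⟫) ∧
    (∀ z v : V3,
      max (‖z‖ - s) 0 + ‖(‖v‖) • z - s • v‖ = 0 ↔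
        ((v = 0 → ‖z‖ ≤ s) ∧ (v ≠ 0 → z = (s / ‖v‖) • v))) :=
  boundary_monotonicity_and_implicit_relation_general s β ε hs hε
end
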